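/- Soundness of ℜ_d for deterministic partial recursive functions: for every formula φ of 𝓛, if ⊢_{ℜ_d} φ then φ is a tautology of the enumeration ξ of deterministic partial recursive functions. -/
import Mathlib


/-- Formulas of the modal language 𝓛: propositional variables, ⊥, →, and ▷. -/
inductive Formula : Type
  | var : ℕ → Formula
  | bot : Formula
  | imp : Formula → Formula → Formula
  | tri : Formula → Formula → Formula
deriving DecidableEq

namespace Formula

/-- ¬φ := φ → ⊥ -/
def neg (φ : Formula) : Formula := imp φ bot
/-- ⊤ := ¬⊥ -/
def top : Formula := neg bot
/-- φ ∨ ψ := ¬φ → ψ -/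
def disj (φ ψ : Formula) : Formula := imp (neg φ) ψ
/-- φ ∧ ψ := ¬(φ → ¬ψ) -/
def conj (φ ψ : Formula) : Formula := neg (imp φ (neg ψ))

/-- `φ` is a substitution instance of a classical propositional tautology:
it evaluates to `true` under every boolean valuation of formulas that
respects `⊥` and `→` (variables and `▷`-formulas are treated as atoms). -/
def IsPropTaut (φ : Formula) : Prop :=
  ∀ v : Formula → Bool, v bot = false →
    (∀ a b, v (imp a b) = (!(v a) || v b)) → v φ = true

/-- Hilbert-style provability.  `Prv false` is the logic ℜ (axioms: classical
tautologies, A1, A2, A3; rules: Modus Ponens and monotonicity M);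
`Prv true` is the logic ℜ_d, which additionally has axiom A4. -/
inductive Prv : Bool → Formula → Prop
  | taut {d : Bool} {φ} : IsPropTaut φ → Prv d φ
  | a1 {d : Bool} (φ ψ χ) : Prv d (imp (tri φ ψ) (imp (tri χ ψ) (tri (disj φ χ) ψ)))
  | a2 {d : Bool} (φ) : Prv d (tri bot φ)
  | a3 {d : Bool} (φ) : Prv d (tri φ top)
  | a4 (φ ψ χ) : Prv true (imp (tri φ ψ) (imp (tri φ χ) (tri φ (conj ψ χ))))
  | mp {d : Bool} {φ ψ} : Prv d (imp φ ψ) → Prv d φ → Prv d ψ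
  | mono {d : Bool} {φ₁ φ₂ ψ₁ ψ₂} : Prv d (imp φ₁ φ₂) → Prv d (imp ψ₁ ψ₂) →
      Prv d (imp (tri φ₂ ψ₁) (tri φ₁ ψ₂))

/-- `Deriv d Δ φ`: φ is derivable from the hypotheses Δ together with all
theorems of the logic (`Prv d`) using only Modus Ponens. -/
inductive Deriv (d : Bool) (Δ : Set Formula) : Formula → Prop
  | hyp {φ} : φ ∈ Δ → Deriv d Δ φ
  | thm {φ} : Prv d φ → Deriv d Δ φ
  | mp {φ ψ} : Deriv d Δ (imp φ ψ) → Deriv d Δ φ → Deriv d Δ ψ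

/-- Conjunction of a list of formulas (empty conjunction is ⊤). -/
def conjList : List Formula → Formula
  | [] => top
  | φ :: l => conj φ (conjList l)

/-- ⋀Γ : conjunction of all formulas of a finite set Γ (⋀∅ = ⊤). -/
noncomputable def bigConj (Γ : Finset Formula) : Formula := conjList Γ.toList

/-- A set of formulas is consistent if ⊥ is not derivable from it. -/
def Consistent (d : Bool) (Δ : Set Formula) : Prop := ¬ Deriv d Δ bot

/-- The pair (u,v) is w-consistent: w ⊬ ⋀u ▷ ¬⋀v. -/
def WCons (d : Bool) (w : Set Formula) (u v : Finset Formula) : Prop :=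
  ¬ Deriv d w (tri (bigConj u) (neg (bigConj v)))

/-- The operation ∼: ∼(¬φ) = φ, and ∼φ = ¬φ if φ is not a negation. -/
def simNeg : Formula → Formula
  | imp φ bot => φ
  | φ => neg φ

/-- Φ is closed under subformulas. -/
def SubClosed (Φ : Finset Formula) : Prop :=
  (∀ a b, imp a b ∈ Φ → a ∈ Φ ∧ b ∈ Φ) ∧ (∀ a b, tri a b ∈ Φ → a ∈ Φ ∧ b ∈ Φ)

/-- Φ is closed under the operation ∼. -/
def SimClosed (Φ : Finset Formula) : Prop := ∀ φ ∈ Φ, simNeg φ ∈ Φ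

/-- w is a maximal consistent subset of Φ: w ⊆ Φ, w is consistent, and for
every φ ∈ Φ either φ ∈ w or ∼φ ∈ w. -/
def MaxCons (d : Bool) (Φ : Finset Formula) (w : Finset Formula) : Prop :=
  w ⊆ Φ ∧ Consistent d ↑w ∧ ∀ φ ∈ Φ, φ ∈ w ∨ simNeg φ ∈ w

/-- Kripke forcing: `rel w u v` means u →_w v, `val w p` means w ⊩ p. -/
def Forces {W : Type*} (rel : W → W → W → Prop) (val : W → ℕ → Prop) :
    W → Formula → Prop
  | w, var p => val w p
  | _, bot => False
  | w, imp a b => Forces rel val w a → Forces rel val w b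
  | w, tri a b => ∀ u v, rel w u v → Forces rel val u a →
      ∃ v', rel w u v' ∧ Forces rel val v' b

end Formula

/-- A Kripke model: a finite set of worlds, a ternary computability relation,
and a forcing relation between worlds and propositional variables. -/
structure KripkeModel where
  W : Type
  fin : Finite W
  rel : W → W → W → Prop
  val : W → ℕ → Prop

/-- A Kripke model is deterministic if for all worlds w, u there is at most
one v with u →_w v. -/
def KripkeModel.Deterministic (M : KripkeModel) : Prop :=
  ∀ w u v v', M.rel w u v → M.rel w u v' → v = v'

/-- Forcing in a Kripke model. -/
def KripkeModel.Forces (M : KripkeModel) : M.W → Formula → Prop :=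
  Formula.Forces M.rel M.val

/-- The standard enumeration of nondeterministic partial recursive functions:
ζ_w(u) = the set of possible outputs of machine (code) w on input u. -/
def zeta (w u : ℕ) : Set ℕ :=
  {v | ((Denumerable.ofNat Nat.Partrec.Code w).eval (Nat.pair u v)).Dom}

/-- The standard enumeration of deterministic partial recursive functions:
ξ_w(u) = the value of the partial recursive function with code w on input u. -/
def xi (w u : ℕ) : Part ℕ :=
  (Denumerable.ofNat Nat.Partrec.Code w).eval u

namespace Formula

/-- Set semantics for nondeterministic partial recursive functions
(existential reading of ▷). -/
def semN (val : ℕ → Set ℕ) : Formula → Set ℕ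
  | var p => val p
  | bot => ∅
  | imp a b => (Set.univ \ semN val a) ∪ semN val b
  | tri a b => {w | ∀ u ∈ semN val a, zeta w u ≠ ∅ → zeta w u ∩ semN val b ≠ ∅}

/-- Set semantics for deterministic partial recursive functions. -/
def semD (val : ℕ → Set ℕ) : Formula → Set ℕ
  | var p => val p
  | bot => ∅
  | imp a b => (Set.univ \ semD val a) ∪ semD val b
  | tri a b => {w | ∀ u ∈ semD val a, ∀ h : (xi w u).Dom, (xi w u).get h ∈ semD val b}

/-- Universal set semantics for nondeterministic partial recursive functions:
every terminating computation path from φ* ends in ψ*. -/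
def semU (val : ℕ → Set ℕ) : Formula → Set ℕ
  | var p => val p
  | bot => ∅
  | imp a b => (Set.univ \ semU val a) ∪ semU val b
  | tri a b => {w | ∀ u ∈ semU val a, zeta w u ⊆ semU val b}

/-- A canonical injective encoding of formulas as natural numbers. -/
def enc : Formula → ℕ
  | var n => 4 * n
  | bot => 1
  | imp a b => 4 * Nat.pair (enc a) (enc b) + 2
  | tri a b => 4 * Nat.pair (enc a) (enc b) + 3

end Formula

namespace Formula

lemma mem_semD_imp {val : ℕ → Set ℕ} {a b : Formula} {w : ℕ} :
    w ∈ semD val (imp a b) ↔ (w ∈ semD val a → w ∈ semD val b) := by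
  simp [semD]; tauto

lemma mem_semD_neg {val : ℕ → Set ℕ} {a : Formula} {w : ℕ} :
    w ∈ semD val (neg a) ↔ ¬ w ∈ semD val a := by
  simp [neg, mem_semD_imp, semD]

lemma mem_semD_disj {val : ℕ → Set ℕ} {a b : Formula} {w : ℕ} :
    w ∈ semD val (disj a b) ↔ (w ∈ semD val a ∨ w ∈ semD val b) := by
  simp [disj, mem_semD_imp, mem_semD_neg]; tauto

lemma mem_semD_conj {val : ℕ → Set ℕ} {a b : Formula} {w : ℕ} :
    w ∈ semD val (conj a b) ↔ (w ∈ semD val a ∧ w ∈ semD val b) := by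
  simp [conj, mem_semD_neg, mem_semD_imp]

lemma mem_semD_top {val : ℕ → Set ℕ} {w : ℕ} : w ∈ semD val top := by
  simp [top, mem_semD_neg, semD]

end Formula

open Formula in
/-- Soundness of ℜ_d: every theorem of ℜ_d is a tautology of the enumeration
ξ of deterministic partial recursive functions. -/
theorem soundness_Rd (φ : Formula) (h : Prv true φ) :
    ∀ val : ℕ → Set ℕ, semD val φ = Set.univ := by
  intro val
  rw [Set.eq_univ_iff_forall]
  suffices H : ∀ (d : Bool) (ψ : Formula), Prv d ψ → ∀ w, w ∈ semD val ψ from H true φ h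
  intro d ψ h
  induction h with
  | @taut _ ψ ht =>
    intro w
    classical
    have := ht (fun χ => decide (w ∈ semD val χ))
      (by simp [semD]) (by intro a b; by_cases ha : w ∈ semD val a <;>
        by_cases hb : w ∈ semD val b <;> simp [ha, hb, mem_semD_imp])
    exact of_decide_eq_true this
  | a1 a b c =>
    intro w
    rw [mem_semD_imp, mem_semD_imp]
    intro h1 h2
    intro u hu hd
    rcases mem_semD_disj.mp hu with h | h
    · exact h1 u h hd
    · exact h2 u h hd
  | a2 a => intro w u hu; simp [semD] at hu
  | a3 a => intro w u _ _; exact mem_semD_top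
  | a4 a b c =>
    intro w
    rw [mem_semD_imp, mem_semD_imp]
    intro h1 h2 u hu hd
    exact mem_semD_conj.mpr ⟨h1 u hu hd, h2 u hu hd⟩
  | mp _ _ ih1 ih2 =>
    intro w
    exact mem_semD_imp.mp (ih1 w) (ih2 w)
  | @mono _ a1 a2 b1 b2 _ _ ih1 ih2 =>
    intro w
    rw [mem_semD_imp]
    intro h u hu hd
    exact mem_semD_imp.mp (ih2 _) (h u (mem_semD_imp.mp (ih1 u) hu) hd)
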